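/- arXiv:math/0505472 — 4 statements merged into one kernel-verified Lean document; each statement's English description precedes it below -/
import Mathlib

section
/- Let S be a finite nonempty set, and for each i ∈ S let h_i : ℕ → ℚ be a function such that there exist N_i > 0 and, for each residue class mod N_i, rationals α, γ with h_i(m) = αm + γ for all sufficiently large m in that class. Then the function m ↦ max_{i∈S} h_i(m) has the same property: there exists N > 0 and, for each residue class mod N, rationals α, γ such that max_i h_i(m) = αm + γ for all sufficiently large m in that class. -/
/-!
Of two affine functions the one with the larger slope (or, for equal slopes, the larger
constant term) eventually dominates, so on each residue class the maximum of two eventually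
affine functions is eventually affine. Passing to the product of the two moduli makes the
residue classes of both functions compatible, and induction over the finite set finishes.
-/

/-- A function g : ℕ → ℚ is eventually affine linear on congruence classes. -/
def EventuallyAffineOnClasses (g : ℕ → ℚ) : Prop :=
  ∃ N : ℕ, 0 < N ∧ ∀ j < N, ∃ α γ : ℚ, ∃ M : ℕ,
    ∀ m : ℕ, M ≤ m → m % N = j → g m = α * m + γ

def EventuallyAffineOnClassesMod (g : ℕ → ℚ) (N : ℕ) : Prop :=
  ∀ j < N, ∃ α γ : ℚ, ∃ M : ℕ, ∀ m : ℕ, M ≤ m → m % N = j → g m = α * m + γ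

theorem exists_forall_ge_affine_le_affine {α₁ γ₁ α₂ γ₂ : ℚ} (h : α₁ < α₂) :
    ∃ M : ℕ, ∀ m : ℕ, M ≤ m → α₁ * m + γ₁ ≤ α₂ * m + γ₂ := by
  refine ⟨⌈(γ₁ - γ₂) / (α₂ - α₁)⌉₊, fun m hm => ?_⟩
  have hM : (γ₁ - γ₂) / (α₂ - α₁) ≤ m := Nat.ceil_le.mp hm
  have := (div_le_iff₀ (sub_pos.mpr h)).mp hM
  linarith

theorem exists_forall_ge_max_affine_eq_affine (α₁ γ₁ α₂ γ₂ : ℚ) :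
    ∃ α γ : ℚ, ∃ M : ℕ, ∀ m : ℕ, M ≤ m →
      max (α₁ * m + γ₁) (α₂ * m + γ₂) = α * m + γ := by
  rcases lt_trichotomy α₁ α₂ with hlt | rfl | hgt
  · obtain ⟨M, hM⟩ := exists_forall_ge_affine_le_affine (γ₁ := γ₁) (γ₂ := γ₂) hlt
    exact ⟨α₂, γ₂, M, fun m hm => max_eq_right (hM m hm)⟩
  · exact ⟨α₁, max γ₁ γ₂, 0, fun m _ => max_add_add_left _ _ _⟩
  · obtain ⟨M, hM⟩ := exists_forall_ge_affine_le_affine (γ₁ := γ₂) (γ₂ := γ₁) hgt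
    exact ⟨α₁, γ₁, M, fun m hm => max_eq_left (hM m hm)⟩

namespace EventuallyAffineOnClassesMod

theorem of_dvd {g : ℕ → ℚ} {N N' : ℕ} (hg : EventuallyAffineOnClassesMod g N) (hN : 0 < N)
    (hdvd : N ∣ N') : EventuallyAffineOnClassesMod g N' := by
  intro j _
  obtain ⟨α, γ, M, hM⟩ := hg (j % N) (Nat.mod_lt _ hN)
  refine ⟨α, γ, M, fun m hm hmj => hM m hm ?_⟩
  rw [← Nat.mod_mod_of_dvd m hdvd, hmj]

theorem sup {f g : ℕ → ℚ} {N : ℕ} (hf : EventuallyAffineOnClassesMod f N)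
    (hg : EventuallyAffineOnClassesMod g N) : EventuallyAffineOnClassesMod (f ⊔ g) N := by
  intro j hj
  obtain ⟨α₁, γ₁, M₁, hM₁⟩ := hf j hj
  obtain ⟨α₂, γ₂, M₂, hM₂⟩ := hg j hj
  obtain ⟨α, γ, M, hM⟩ := exists_forall_ge_max_affine_eq_affine α₁ γ₁ α₂ γ₂
  refine ⟨α, γ, M ⊔ M₁ ⊔ M₂, fun m hm hmj => ?_⟩
  simp only [sup_le_iff] at hm
  rw [Pi.sup_apply, hM₁ m hm.1.2 hmj, hM₂ m hm.2 hmj, hM m hm.1.1]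

end EventuallyAffineOnClassesMod

theorem EventuallyAffineOnClasses.sup {f g : ℕ → ℚ} (hf : EventuallyAffineOnClasses f)
    (hg : EventuallyAffineOnClasses g) : EventuallyAffineOnClasses (f ⊔ g) := by
  obtain ⟨N₁, hN₁, hf : EventuallyAffineOnClassesMod f N₁⟩ := hf
  obtain ⟨N₂, hN₂, hg : EventuallyAffineOnClassesMod g N₂⟩ := hg
  exact ⟨N₁ * N₂, Nat.mul_pos hN₁ hN₂,
    (hf.of_dvd hN₁ (dvd_mul_right _ _)).sup (hg.of_dvd hN₂ (dvd_mul_left _ _))⟩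

/-- The maximum of finitely many functions that are eventually affine linear on
congruence classes is again eventually affine linear on congruence classes. -/
theorem stmt3 {ι : Type*} (S : Finset ι) (hS : S.Nonempty) (h : ι → ℕ → ℚ)
    (hh : ∀ i ∈ S, EventuallyAffineOnClasses (h i)) :
    EventuallyAffineOnClasses (fun m => S.sup' hS (fun i => h i m)) := by
  have hsup : EventuallyAffineOnClasses (S.sup' hS h) :=
    Finset.sup'_induction hS h (fun _ hf _ hg => hf.sup hg) hh
  rwa [show S.sup' hS h = fun m => S.sup' hS (fun i => h i m) from
    funext fun m => Finset.sup'_apply hS h m] at hsup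
end

section
/- Let p be a prime, k = ℤ/pℤ, and J an ideal of k[X_1,…,X_n]. For v ∈ ℕ^n, write X^v = Π_i X_i^{v_i}. Then for every e ≥ 1 and v ∈ ℕ^n, the colon ideal satisfies (J^{[p^e]} : X^{pv}) = (J^{[p^{e−1}]} : X^v)^{[p]}. -/
/-!
Over `ZMod p` the expansion `expand p` is the Frobenius `g ↦ g ^ p`, so `J^{[p^e]}` is the
extension of `J^{[p^{e-1}]}` along `expand p`, and `X^{pv} = expand p (X^v)`. Along `expand p`
the polynomial ring is free on the monomials `X^u` with `u < p` componentwise, and extension of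
ideals along a free ring map commutes with colon ideals by elements of the
source: `f x ∈ I B` iff every coordinate of `f x`, namely `f` times the corresponding coordinate
of `x`, lies in `I`.
-/

open MvPolynomial

/-- The q-th bracket (Frobenius) power of an ideal: the ideal generated by q-th powers. -/
noncomputable def bracketPow {n : ℕ} {R : Type*} [CommRing R] (I : Ideal (MvPolynomial (Fin n) R))
    (q : ℕ) : Ideal (MvPolynomial (Fin n) R) :=
  Ideal.span ((fun g => g ^ q) '' (I : Set (MvPolynomial (Fin n) R)))

namespace Ideal

variable {A B F ι : Type*} [CommSemiring A] [CommSemiring B] [FunLike F A B]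

theorem coord_mem_of_mem_map {φ : F} {π : ι → B →+ A}
    (hπ : ∀ i a x, π i (φ a * x) = a * π i x) {I : Ideal A} {x : B} (hx : x ∈ I.map φ) (i : ι) :
    π i x ∈ I := by
  suffices ∀ b, π i (b * x) ∈ I by simpa using this 1
  induction hx using Submodule.span_induction with
  | mem y hy =>
    obtain ⟨g, hg, rfl⟩ := hy
    intro b
    rw [mul_comm, hπ]
    exact I.mul_mem_right _ hg
  | zero => simp
  | add y z _ _ hy hz => exact fun b => by rw [mul_add, map_add]; exact I.add_mem (hy b) (hz b)
  | smul c y _ hy => exact fun b => by rw [smul_eq_mul, ← mul_assoc]; exact hy (b * c)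

theorem map_colon_span_singleton_of_coords [RingHomClass F A B] (φ : F) (π : ι → B →+ A)
    (hπ : ∀ i a x, π i (φ a * x) = a * π i x)
    (hspan : ∀ x, x ∈ span (Set.range fun i => φ (π i x))) (I : Ideal A) (f : A) :
    (I.map φ).colon (span {φ f}) = (I.colon (span {f})).map φ := by
  apply le_antisymm
  · intro x hx
    rw [mem_colon_span_singleton] at hx
    refine span_le.2 ?_ (hspan x)
    rintro _ ⟨i, rfl⟩
    apply mem_map_of_mem
    rw [mem_colon_span_singleton, mul_comm, ← hπ, mul_comm]
    exact coord_mem_of_mem_map hπ hx i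
  · rw [map_le_iff_le_comap]
    intro g hg
    rw [mem_comap, mem_colon_span_singleton, ← map_mul]
    exact mem_map_of_mem _ (mem_colon_span_singleton.1 hg)

end Ideal

namespace Finsupp

variable {σ : Type*}

noncomputable def divNat (m : σ →₀ ℕ) (p : ℕ) : σ →₀ ℕ := m.mapRange (· / p) (Nat.zero_div p)

noncomputable def modNat (m : σ →₀ ℕ) (p : ℕ) : σ →₀ ℕ := m.mapRange (· % p) (Nat.zero_mod p)

@[simp] theorem divNat_apply (m : σ →₀ ℕ) (p : ℕ) (i : σ) : m.divNat p i = m i / p := rfl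

@[simp] theorem modNat_apply (m : σ →₀ ℕ) (p : ℕ) (i : σ) : m.modNat p i = m i % p := rfl

theorem smul_divNat_add_modNat (m : σ →₀ ℕ) (p : ℕ) : p • m.divNat p + m.modNat p = m := by
  ext i
  simp [Nat.div_add_mod]

theorem modNat_smul_add (d m : σ →₀ ℕ) (p : ℕ) : (p • d + m).modNat p = m.modNat p := by
  ext i
  simp

theorem divNat_smul_add {p : ℕ} (hp : p ≠ 0) (d m : σ →₀ ℕ) :
    (p • d + m).divNat p = d + m.divNat p := by
  ext i
  simp [Nat.mul_add_div (Nat.pos_of_ne_zero hp)]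

end Finsupp

namespace MvPolynomial

variable {σ R : Type*} [CommSemiring R] {p : ℕ}

theorem prod_X_pow_mul_eq_expand [Fintype σ] (v : σ → ℕ) :
    ∏ i, (X i : MvPolynomial σ R) ^ (p * v i) = expand p (∏ i, X i ^ v i) := by
  simp [map_prod, pow_mul]

section frobeniusCoord

variable [DecidableEq σ]

-- The coordinate of `h` at the basis vector `X^u` of the polynomial ring over `expand p`:
-- each term `c X^m` of `h` with `m ≡ u mod p` contributes `c X^(m / p)`.
noncomputable def frobeniusCoord (p : ℕ) (u : σ →₀ ℕ) : MvPolynomial σ R →ₗ[R] MvPolynomial σ R :=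
  (basisMonomials σ R).constr R fun m => if m.modNat p = u then monomial (m.divNat p) 1 else 0

theorem frobeniusCoord_monomial (u m : σ →₀ ℕ) (c : R) :
    frobeniusCoord p u (monomial m c) = if m.modNat p = u then monomial (m.divNat p) c else 0 := by
  have hbasis : monomial m c = c • basisMonomials σ R m := by simp [smul_monomial]
  rw [hbasis, map_smul, frobeniusCoord, Module.Basis.constr_basis]
  split_ifs <;> simp [smul_monomial]

theorem frobeniusCoord_expand_mul (hp : p ≠ 0) (u : σ →₀ ℕ) (c h : MvPolynomial σ R) :
    frobeniusCoord p u (expand p c * h) = c * frobeniusCoord p u h := by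
  induction c using induction_on' with
  | monomial d a =>
    induction h using induction_on' with
    | monomial m b =>
      rw [expand_monomial, monomial_mul, frobeniusCoord_monomial, frobeniusCoord_monomial,
        Finsupp.modNat_smul_add, Finsupp.divNat_smul_add hp, mul_ite, mul_zero, monomial_mul]
    | add f g hf hg => rw [mul_add, map_add, hf, hg, map_add, mul_add]
  | add f g hf hg => rw [map_add, add_mul, map_add, hf, hg, add_mul]

theorem expand_frobeniusCoord_monomial_mul (m : σ →₀ ℕ) (c : R) :
    expand p (frobeniusCoord p (m.modNat p) (monomial m c)) * monomial (m.modNat p) 1 =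
      monomial m c := by
  rw [frobeniusCoord_monomial, if_pos rfl, expand_monomial, monomial_mul, mul_one,
    Finsupp.smul_divNat_add_modNat]

theorem sum_expand_frobeniusCoord_mul_monomial (h : MvPolynomial σ R) :
    ∑ u ∈ h.support.image (·.modNat p), expand p (frobeniusCoord p u h) * monomial u 1 = h := by
  have hcoord : ∀ u, frobeniusCoord p u h =
      ∑ m ∈ h.support, frobeniusCoord p u (monomial m (coeff m h)) := fun u => by
    conv_lhs => rw [h.as_sum]
    exact map_sum _ _ _
  simp only [hcoord, map_sum, Finset.sum_mul]
  rw [Finset.sum_comm]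
  conv_rhs => rw [h.as_sum]
  refine Finset.sum_congr rfl fun m hm => ?_
  rw [Finset.sum_eq_single_of_mem _ (Finset.mem_image_of_mem _ hm),
    expand_frobeniusCoord_monomial_mul]
  intro u _ hu
  rw [frobeniusCoord_monomial, if_neg (Ne.symm hu), map_zero, zero_mul]

theorem mem_span_expand_frobeniusCoord (h : MvPolynomial σ R) :
    h ∈ Ideal.span (Set.range fun u => expand p (frobeniusCoord p u h)) := by
  have hsum := Ideal.sum_mem (Ideal.span (Set.range fun u => expand p (frobeniusCoord p u h)))
    (t := h.support.image (·.modNat p)) fun u _ =>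
      Ideal.mul_mem_right (monomial u 1) _ (Ideal.subset_span (Set.mem_range_self u))
  rwa [sum_expand_frobeniusCoord_mul_monomial] at hsum

end frobeniusCoord

theorem map_expand_colon_span_singleton (hp : p ≠ 0)
    (I : Ideal (MvPolynomial σ R)) (f : MvPolynomial σ R) :
    (I.map (expand p)).colon (Ideal.span {expand p f}) =
      (I.colon (Ideal.span {f})).map (expand p) := by
  classical
  exact Ideal.map_colon_span_singleton_of_coords (expand p)
    (fun u => (frobeniusCoord (R := R) p u).toAddMonoidHom)
    (fun u => frobeniusCoord_expand_mul hp u) mem_span_expand_frobeniusCoord I f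

end MvPolynomial

section bracketPow

variable {n p : ℕ} [Fact p.Prime]

theorem bracketPow_mul_eq_map_expand (I : Ideal (MvPolynomial (Fin n) (ZMod p))) (q : ℕ) :
    bracketPow I (q * p) = (bracketPow I q).map (expand p) := by
  rw [bracketPow, bracketPow, Ideal.map_span, Set.image_image]
  simp_rw [expand_zmod, pow_mul]

theorem bracketPow_eq_map_expand (I : Ideal (MvPolynomial (Fin n) (ZMod p))) :
    bracketPow I p = I.map (expand p) := by
  simpa [bracketPow] using bracketPow_mul_eq_map_expand I 1

end bracketPow

/-- (J^{[p^e]} : X^{pv}) = (J^{[p^{e-1}]} : X^v)^{[p]} over ℤ/pℤ. -/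
theorem stmt5 (n : ℕ) (p : ℕ) (hp : p.Prime)
    (J : Ideal (MvPolynomial (Fin n) (ZMod p))) (e : ℕ) (he : 1 ≤ e) (v : Fin n → ℕ) :
    (bracketPow J (p ^ e)).colon (Ideal.span {∏ i, (X i : MvPolynomial (Fin n) (ZMod p)) ^ (p * v i)}) =
      bracketPow ((bracketPow J (p ^ (e - 1))).colon
        (Ideal.span {∏ i, (X i : MvPolynomial (Fin n) (ZMod p)) ^ v i})) p := by
  have := Fact.mk hp
  obtain ⟨k, rfl⟩ := Nat.exists_eq_add_of_le' he
  rw [Nat.add_sub_cancel, pow_succ, bracketPow_mul_eq_map_expand, prod_X_pow_mul_eq_expand,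
    map_expand_colon_span_singleton hp.ne_zero, bracketPow_eq_map_expand]
end

section
/- Consider the ideal a = (X_2X_3X_4, X_1X_3X_4, X_1X_2X_4, X_1X_2X_3) with ℓ_i(β) = Σ_{j≠i} β_j for 1 ≤ i ≤ 4. If b ∈ ℕ^4 satisfies Σ_j b_j ≥ 3 b_i for all i, then max{ Σ_{j=1}^4 β_j : β ∈ ℕ^4, ℓ_i(β) ≤ b_i for all i } = ⌊(Σ_i b_i)/3⌋. -/
/-- For the ideal (Π_{j≠i} X_j : 1 ≤ i ≤ 4): if Σ_j b_j ≥ 3 b_i for all i, then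
max{Σ_j β_j : β ∈ ℕ^4, Σ_{j≠i} β_j ≤ b_i ∀i} = ⌊(Σ_i b_i)/3⌋. -/
theorem stmt13 (b : Fin 4 → ℕ) (hb : ∀ i, 3 * b i ≤ ∑ j, b j) :
    IsGreatest {t : ℕ | ∃ β : Fin 4 → ℕ,
      (∀ i, ∑ j ∈ Finset.univ.erase i, β j ≤ b i) ∧ t = ∑ j, β j}
      ((∑ i, b i) / 3) := by
  have key : ∀ (f : Fin 4 → ℕ) (i : Fin 4),
      f i + ∑ j ∈ Finset.univ.erase i, f j = ∑ j, f j := fun f i =>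
    Finset.add_sum_erase _ f (Finset.mem_univ i)
  have hSsum : (∑ j, b j) = b 0 + b 1 + b 2 + b 3 := Fin.sum_univ_four b
  have hbq : ∀ i, b i ≤ (∑ j, b j) / 3 := fun i => by have := hb i; omega
  have h0 := hbq 0; have h1 := hbq 1; have h2 := hbq 2; have h3 := hbq 3
  set β : Fin 4 → ℕ :=
    fun j => ((∑ i, b i) / 3 - b j) + if j = 0 then (∑ i, b i) % 3 else 0 with hβdef
  have hβval : ∀ j, β j = ((∑ i, b i) / 3 - b j) + if j = 0 then (∑ i, b i) % 3 else 0 :=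
    fun j => rfl
  have hβsum : (∑ j, β j) =
      ((∑ i, b i) / 3 - b 0 + (∑ i, b i) % 3) + ((∑ i, b i) / 3 - b 1)
        + ((∑ i, b i) / 3 - b 2) + ((∑ i, b i) / 3 - b 3) := by
    rw [Fin.sum_univ_four]
    simp [hβval]
  constructor
  · refine ⟨β, ?_, ?_⟩
    · intro i
      have hk := key β i
      rw [hβsum] at hk
      have hlow : (∑ i, b i) / 3 - b i ≤ β i := by
        rw [hβval i]; omega
      have hib := hbq i
      omega
    · rw [hβsum]; omega
  · rintro t ⟨γ, hγ, rfl⟩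
    have k0 := key γ 0; have k1 := key γ 1; have k2 := key γ 2; have k3 := key γ 3
    have e0 := hγ 0; have e1 := hγ 1; have e2 := hγ 2; have e3 := hγ 3
    have hT : ∑ j, γ j = γ 0 + γ 1 + γ 2 + γ 3 := Fin.sum_univ_four γ
    omega
end

section
/- Let a = (a_{i,j}) be an n×r nonnegative integer matrix with nonzero columns, τ and τ_ℚ as above, and let N be a positive integer divisible by the determinant of every square submatrix of a. If w ∈ ℕ^n has all coordinates divisible by N, and w lies in a cone generated by a linearly independent set consisting of some columns a_j (j ∈ I_1) and some standard basis vectors e_i (i ∈ I_2) forming a basis of ℝ^n, then in the expression w = Σ_{j∈I_1} α_j a_j + Σ_{i∈I_2} β_i e_i with α_j, β_i ≥ 0, all α_j and β_i are integers. -/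
/-!
Since the columns `a_j` (`j ∈ I1`) and the unit vectors `e_i` (`i ∈ I2`) are independent, the
square submatrix of `a` on the rows outside `I2` and the columns in `I1` is nonsingular, and
reading off those rows of the decomposition gives a square system for the `α_j` alone. By
Cramer's rule `det · α` is the adjugate applied to the integral right-hand side, which is
divisible by `N` and hence by `det`; so the `α_j` are integers, and then so are the
`β_i = w_i - Σ α_j a_{i,j}`.
-/

open Matrix

theorem Matrix.exists_intCast_eq_of_mulVec_eq_of_det_dvd {K ι : Type*} [Field K] [CharZero K]
    [Fintype ι] [DecidableEq ι] (A : Matrix ι ι ℤ) (hA : A.det ≠ 0) {b : ι → ℤ}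
    (hb : ∀ i, A.det ∣ b i) {x : ι → K}
    (hx : A.map (Int.cast : ℤ → K) *ᵥ x = fun i => (b i : K)) (i : ι) :
    ∃ z : ℤ, x i = z := by
  have hadj : (A.det : K) * x i = ((A.adjugate *ᵥ b) i : ℤ) := by
    have h := congrFun (congrArg ((A.map (Int.cast : ℤ → K)).adjugate *ᵥ ·) hx) i
    rw [mulVec_mulVec, adjugate_mul, smul_mulVec, one_mulVec, ← Int.cast_det, Pi.smul_apply,
      smul_eq_mul] at h
    rw [h, ← eq_intCast (Int.castRingHom K), RingHom.map_mulVec]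
    exact congrFun (congrArg (· *ᵥ _) (RingHom.map_adjugate (Int.castRingHom K) A).symm) i
  obtain ⟨z, hz⟩ : A.det ∣ (A.adjugate *ᵥ b) i :=
    Finset.dvd_sum fun j _ => (hb j).mul_left _
  refine ⟨z, mul_left_cancel₀ (Int.cast_ne_zero.2 hA : (A.det : K) ≠ 0) ?_⟩
  rw [hadj, hz, Int.cast_mul]

theorem eq_zero_of_linearIndependent_sumElim_single {K ι J : Type*} [Ring K] [Fintype J]
    [DecidableEq ι] {S : Finset ι} {v : J → ι → K}
    (hv : LinearIndependent K (Sum.elim v fun i : S => Pi.single (i : ι) (1 : K)))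
    {c : J → K} (hc : ∀ i ∉ S, ∑ j, c j * v j i = 0) : c = 0 := by
  have h := Fintype.linearIndependent_iff.1 hv (Sum.elim c fun i => -∑ j, c j * v j i) ?_
  · exact funext fun j => h (Sum.inl j)
  funext i
  simp only [Fintype.sum_sum_type, Sum.elim_inl, Sum.elim_inr, Finset.sum_apply, Pi.smul_apply,
    smul_eq_mul, Pi.zero_apply]
  rw [Finset.sum_coe_sort S fun a => (-∑ j, c j * v j a) * (Pi.single a (1 : K) : ι → K) i]
  simp only [Pi.single_apply, mul_ite, mul_one, mul_zero, Finset.sum_ite_eq]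
  split_ifs with hi
  · exact add_neg_cancel _
  · rw [add_zero, hc i hi]

theorem Matrix.det_submatrix_ne_zero_of_linearIndependent {K ι J κ : Type*} [CommRing K]
    [IsDomain K] [Fintype ι] [DecidableEq ι] [Fintype κ] [DecidableEq κ] (A : Matrix ι J K)
    {S : Finset ι} {T : Finset J}
    (hA : LinearIndependent K
      (Sum.elim (fun j : T => fun i => A i j) fun i : S => Pi.single (i : ι) (1 : K)))
    (eS : κ ≃ ↥Sᶜ) (eT : κ ≃ T) :
    (A.submatrix (fun s => (eS s : ι)) fun t => (eT t : J)).det ≠ 0 := by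
  intro h
  obtain ⟨c, hc0, hc⟩ := exists_mulVec_eq_zero_iff.2 h
  have hker := eq_zero_of_linearIndependent_sumElim_single hA (c := c ∘ eT.symm) fun i hi => by
    have hrow := congrFun hc (eS.symm ⟨i, Finset.mem_compl.2 hi⟩)
    rw [← eT.sum_comp]
    simpa [mulVec, dotProduct, mul_comm] using hrow
  exact hc0 (funext fun t => by simpa using congrFun hker (eT t))

theorem stmt17_general (n r : ℕ) (a : Fin n → Fin r → ℕ)
    (N : ℕ)
    (hN : ∀ (k : ℕ) (rows : Fin k → Fin n) (cols : Fin k → Fin r),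
      Function.Injective rows → Function.Injective cols →
      (Matrix.of fun s t => (a (rows s) (cols t) : ℤ)).det ≠ 0 →
      (Matrix.of fun s t => (a (rows s) (cols t) : ℤ)).det ∣ (N : ℤ))
    (w : Fin n → ℕ) (hw : ∀ i, N ∣ w i)
    (I1 : Finset (Fin r)) (I2 : Finset (Fin n))
    (hind : LinearIndependent ℝ
      (fun x : ↥I1 ⊕ ↥I2 => Sum.elim
        (fun j : ↥I1 => fun i => (a i (j : Fin r) : ℝ))
        (fun i : ↥I2 => (Pi.single (i : Fin n) 1 : Fin n → ℝ)) x))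
    (hbasis : I1.card + I2.card = n)
    (α : Fin r → ℝ)
    (β : Fin n → ℝ)
    (hdecomp : ∀ i, (w i : ℝ) =
      (∑ j ∈ I1, α j * (a i j : ℝ)) + (if i ∈ I2 then β i else 0)) :
    (∀ j ∈ I1, ∃ z : ℤ, α j = z) ∧ (∀ i ∈ I2, ∃ z : ℤ, β i = z) := by
  classical
  have hcard : I2ᶜ.card = I1.card := by rw [Finset.card_compl, Fintype.card_fin]; omega
  set eT : Fin I1.card ≃ I1 := I1.equivFin.symm
  set eS : Fin I1.card ≃ ↥I2ᶜ := (Finset.equivFinOfCardEq hcard).symm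
  set M : Matrix (Fin I1.card) (Fin I1.card) ℤ := Matrix.of fun s t => (a (eS s) (eT t) : ℤ)
  have hdet : M.det ≠ 0 := by
    have hM : M.map (Int.cast : ℤ → ℝ) =
        (Matrix.of fun i j => (a i j : ℝ)).submatrix (fun s => (eS s : Fin n)) fun t => eT t := by
      ext; simp [M]
    have hR := (Matrix.of fun i j => (a i j : ℝ)).det_submatrix_ne_zero_of_linearIndependent
      hind eS eT
    rwa [← hM, ← Int.cast_det, Int.cast_ne_zero] at hR
  have hdvd : M.det ∣ N := hN _ _ _ (Subtype.val_injective.comp eS.injective)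
    (Subtype.val_injective.comp eT.injective) hdet
  have hmul : M.map (Int.cast : ℤ → ℝ) *ᵥ (fun t => α (eT t)) =
      fun s => ((w (eS s) : ℤ) : ℝ) := by
    funext s
    rw [Int.cast_natCast, hdecomp, if_neg (Finset.mem_compl.1 (eS s).2), add_zero,
      ← Finset.sum_coe_sort, ← eT.sum_comp]
    simp [mulVec, dotProduct, M, mul_comm]
  have hα : ∀ j ∈ I1, α j ∈ (⊥ : Subring ℝ) := fun j hj => by
    obtain ⟨z, hz⟩ := M.exists_intCast_eq_of_mulVec_eq_of_det_dvd hdet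
      (fun s => hdvd.trans (Int.natCast_dvd_natCast.2 (hw _))) hmul (eT.symm ⟨j, hj⟩)
    exact Subring.mem_bot.2 ⟨z, by simpa using hz.symm⟩
  have hβ : ∀ i ∈ I2, β i ∈ (⊥ : Subring ℝ) := fun i hi => by
    rw [show β i = w i - ∑ j ∈ I1, α j * a i j by rw [hdecomp, if_pos hi]; ring]
    exact sub_mem (natCast_mem _ _) (sum_mem fun j hj => mul_mem (hα j hj) (natCast_mem _ _))
  exact ⟨fun j hj => (Subring.mem_bot.1 (hα j hj)).imp fun _ => Eq.symm,
    fun i hi => (Subring.mem_bot.1 (hβ i hi)).imp fun _ => Eq.symm⟩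

/-- If N is a positive integer divisible by the (nonzero) determinant of every square
submatrix of the nonnegative integer matrix a, w ∈ ℕ^n has all coordinates divisible by N,
and w = Σ_{j∈I1} α_j a_j + Σ_{i∈I2} β_i e_i where the columns a_j (j ∈ I1) together with
the standard basis vectors e_i (i ∈ I2) are linearly independent over ℝ and α_j, β_i ≥ 0,
then all α_j and β_i are integers. -/
theorem stmt17 (n r : ℕ) (a : Fin n → Fin r → ℕ)
    (hcol : ∀ j, ∃ i, 0 < a i j)
    (N : ℕ) (hNpos : 0 < N)
    (hN : ∀ (k : ℕ) (rows : Fin k → Fin n) (cols : Fin k → Fin r),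
      Function.Injective rows → Function.Injective cols →
      (Matrix.of fun s t => (a (rows s) (cols t) : ℤ)).det ≠ 0 →
      (Matrix.of fun s t => (a (rows s) (cols t) : ℤ)).det ∣ (N : ℤ))
    (w : Fin n → ℕ) (hw : ∀ i, N ∣ w i)
    (I1 : Finset (Fin r)) (I2 : Finset (Fin n))
    (hind : LinearIndependent ℝ
      (fun x : ↥I1 ⊕ ↥I2 => Sum.elim
        (fun j : ↥I1 => fun i => (a i (j : Fin r) : ℝ))
        (fun i : ↥I2 => (Pi.single (i : Fin n) 1 : Fin n → ℝ)) x))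
    (hbasis : I1.card + I2.card = n)
    (α : Fin r → ℝ) (hα : ∀ j ∈ I1, 0 ≤ α j)
    (β : Fin n → ℝ) (hβ : ∀ i ∈ I2, 0 ≤ β i)
    (hdecomp : ∀ i, (w i : ℝ) =
      (∑ j ∈ I1, α j * (a i j : ℝ)) + (if i ∈ I2 then β i else 0)) :
    (∀ j ∈ I1, ∃ z : ℤ, α j = z) ∧ (∀ i ∈ I2, ∃ z : ℤ, β i = z) :=
  stmt17_general n r a N hN w hw I1 I2 hind hbasis α β hdecomp
end
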